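/- arXiv:1603.07310 — 2 statements merged into one kernel-verified Lean document; each statement's English description precedes it below -/
import Mathlib

section
/- Let L ≥ 1, let U ⊂ I² be a closed ball, let (φ_k) be a sequence of L-bi-Lipschitz maps φ_k : I² → ℝ² converging uniformly to a map φ : I² → ℝ². Then for every ε > 0 there exists a positive integer k₀ such that for all k ≥ k₀: (i) φ_k(U) ⊆ V_ε^{ext}(φ(U)), and (ii) V_ε^{int}(φ(U)) ⊆ φ_k(U), where V_ε^{ext}(φ(U)) := {x ∈ ℝ² : d(x, φ(U)) < ε} and V_ε^{int}(φ(U)) := {x ∈ φ(U) : d(x, ∂φ(U)) > ε}. -/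
/-!
The limit `φ` is again `L`-bi-Lipschitz, so `φ` is a homeomorphism of `U` onto `φ(U)`, and part (i)
is immediate from uniform convergence. Part (ii) is a degree argument. If `h` is continuous and
injective on the ball `B = B̄(z, r)` and `u` is an interior point, the loop
`v ↦ h (z + r v) - h u` over the unit sphere has nonzero winding number: it is freely homotopic to
the odd loop `v ↦ h (u + ρ v) - h (u - ρ v)` for small `ρ` (Borsuk). If `g` is closer to `h` on
`∂B` than `h u` is, the loops of `g - h u` and `h - h u` are homotopic (Rouché), so if `h u` were
not a value of `g` the former would contract through `B`. Hence `h u ∈ g(B)`. For `h = φ`,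
`g = φ_k` this gives (ii) once `φ(∂U) ⊆ ∂φ(U)`, which follows from the same statement applied to
`φ⁻¹` (invariance of domain).
-/

open Set Filter Topology Metric

noncomputable section

abbrev I2 : Set (ℝ × ℝ) := Set.Icc ((0, 0) : ℝ × ℝ) (1, 1)

def BiLipOn (L : ℝ) (f : ℝ × ℝ → ℝ × ℝ) (s : Set (ℝ × ℝ)) : Prop :=
  ∀ x ∈ s, ∀ y ∈ s,
    (1 / L) * dist x y ≤ dist (f x) (f y) ∧ dist (f x) (f y) ≤ L * dist x y

section Ball

variable {E : Type*} [SeminormedAddCommGroup E] [NormedSpace ℝ E] {z v : E} {r : ℝ}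

theorem add_smul_mem_closedBall (hr : 0 ≤ r) (hv : v ∈ closedBall 0 1) :
    z + r • v ∈ closedBall z r := by
  simpa [norm_smul, abs_of_nonneg hr] using
    mul_le_of_le_one_right hr (mem_closedBall_zero_iff.1 hv)

theorem add_smul_mem_sphere (hr : 0 ≤ r) (hv : v ∈ sphere 0 1) : z + r • v ∈ sphere z r := by
  simp [norm_smul, abs_of_nonneg hr, mem_sphere_zero_iff_norm.1 hv]

end Ball

theorem IsPreconnected.eq_of_exp_eq_one {X : Type*} [TopologicalSpace X] {S : Set X}
    (hS : IsPreconnected S) {g : X → ℂ} (hg : ContinuousOn g S)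
    (h1 : ∀ x ∈ S, Complex.exp (g x) = 1) {x y : X} (hx : x ∈ S) (hy : y ∈ S) : g x = g y := by
  refine hS.constant_of_mapsTo (T := AddSubgroup.zmultiples (2 * Real.pi * Complex.I))
    ⟨NormedSpace.discreteTopology_zmultiples _⟩ hg (fun x hx => ?_) hx hy
  obtain ⟨n, hn⟩ := Complex.exp_eq_one_iff.1 (h1 x hx)
  exact AddSubgroup.mem_zmultiples_iff.2 ⟨n, by rw [hn, zsmul_eq_mul]⟩

theorem Convex.exists_continuousOn_exp_eq {E : Type*} [NormedAddCommGroup E] [NormedSpace ℝ E]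
    {C : Set E} (hC : Convex ℝ C) {f : E → ℂ} (hf : ContinuousOn f C) (h0 : ∀ x ∈ C, f x ≠ 0) :
    ∃ ℓ : E → ℂ, ContinuousOn ℓ C ∧ ∀ x ∈ C, Complex.exp (ℓ x) = f x := by
  classical
  rcases C.eq_empty_or_nonempty with rfl | ⟨x₀, hx₀⟩
  · exact ⟨0, continuousOn_empty _, by simp⟩
  have := hC.contractibleSpace ⟨x₀, hx₀⟩
  have := hC.locallyPathConnectedSpace
  obtain ⟨F, ⟨-, hF⟩, -⟩ := Complex.isCoveringMapOn_exp.existsUnique_continuousMap_lifts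
    ⟨C.domRestrict f, continuousOn_iff_continuous_domRestrict.1 hf⟩ (a₀ := ⟨x₀, hx₀⟩)
    (Complex.exp_log (h0 x₀ hx₀)) fun x => h0 x x.2
  refine ⟨fun x => if hx : x ∈ C then F ⟨x, hx⟩ else 0, ?_, fun x hx => ?_⟩
  · refine continuousOn_iff_continuous_domRestrict.2 ?_
    convert F.continuous using 1
    funext x
    simp [x.2]
  · simpa [hx] using congrFun hF ⟨x, hx⟩

/-- For a loop `γ`, `d` is `2πi` times its winding number about `0`. -/
def HasLogIncrement (γ : ℝ → ℂ) (d : ℂ) : Prop :=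
  ∃ ℓ : ℝ → ℂ, ContinuousOn ℓ (Icc 0 1) ∧ (∀ t ∈ Icc (0 : ℝ) 1, Complex.exp (ℓ t) = γ t) ∧
    ℓ 1 - ℓ 0 = d

namespace HasLogIncrement

theorem unique {γ : ℝ → ℂ} {d d' : ℂ} (h : HasLogIncrement γ d) (h' : HasLogIncrement γ d') :
    d = d' := by
  obtain ⟨ℓ, hℓ, hexp, rfl⟩ := h
  obtain ⟨ℓ', hℓ', hexp', rfl⟩ := h'
  have key := isPreconnected_Icc.eq_of_exp_eq_one (hℓ.sub hℓ') (fun t ht => by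
    have : γ t ≠ 0 := hexp t ht ▸ Complex.exp_ne_zero _
    simp [Complex.exp_sub, hexp t ht, hexp' t ht, this])
    (right_mem_Icc.2 zero_le_one) (left_mem_Icc.2 zero_le_one)
  simp only [Pi.sub_apply] at key
  linear_combination key

theorem const {c : ℂ} (hc : c ≠ 0) : HasLogIncrement (fun _ => c) 0 :=
  ⟨fun _ => Complex.log c, continuousOn_const, fun _ _ => Complex.exp_log hc, sub_self _⟩

theorem iff_of_homotopy {H : ℝ × ℝ → ℂ} (hH : ContinuousOn H (Icc 0 1 ×ˢ Icc 0 1))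
    (h0 : ∀ p ∈ Icc (0 : ℝ) 1 ×ˢ Icc (0 : ℝ) 1, H p ≠ 0)
    (hloop : ∀ τ ∈ Icc (0 : ℝ) 1, H (τ, 1) = H (τ, 0)) {d : ℂ} :
    HasLogIncrement (fun t => H (0, t)) d ↔ HasLogIncrement (fun t => H (1, t)) d := by
  obtain ⟨ℓ, hℓ, hexp⟩ :=
    ((convex_Icc (0 : ℝ) 1).prod (convex_Icc (0 : ℝ) 1)).exists_continuousOn_exp_eq hH h0
  have edge : ∀ τ ∈ Icc (0 : ℝ) 1,
      HasLogIncrement (fun t => H (τ, t)) (ℓ (τ, 1) - ℓ (τ, 0)) := fun τ hτ =>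
    ⟨fun t => ℓ (τ, t), hℓ.comp (by fun_prop) fun t ht => ⟨hτ, ht⟩,
      fun t ht => hexp _ ⟨hτ, ht⟩, rfl⟩
  have h01 : (0 : ℝ) ∈ Icc (0 : ℝ) 1 := left_mem_Icc.2 zero_le_one
  have h11 : (1 : ℝ) ∈ Icc (0 : ℝ) 1 := right_mem_Icc.2 zero_le_one
  -- the increment `τ ↦ ℓ (τ, 1) - ℓ (τ, 0)` is continuous with values in `2πiℤ`
  have hconst : ℓ (0, 1) - ℓ (0, 0) = ℓ (1, 1) - ℓ (1, 0) := by
    refine isPreconnected_Icc.eq_of_exp_eq_one (g := fun τ => ℓ (τ, 1) - ℓ (τ, 0))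
      ((hℓ.comp (by fun_prop) fun τ hτ => ⟨hτ, h11⟩).sub
        (hℓ.comp (by fun_prop) fun τ hτ => ⟨hτ, h01⟩)) (fun τ hτ => ?_) h01 h11
    rw [Complex.exp_sub, hexp _ ⟨hτ, h11⟩, hexp _ ⟨hτ, h01⟩, hloop τ hτ,
      div_self (h0 _ ⟨hτ, h01⟩)]
  constructor
  · intro h
    rw [h.unique (edge 0 h01), hconst]
    exact edge 1 h11
  · intro h
    rw [h.unique (edge 1 h11), ← hconst]
    exact edge 0 h01

theorem ne_zero_of_odd {γ : ℝ → ℂ} {d : ℂ} (hγ : HasLogIncrement γ d)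
    (hodd : ∀ t ∈ Icc (0 : ℝ) (1 / 2), γ (t + 1 / 2) = -γ t) : d ≠ 0 := by
  obtain ⟨ℓ, hℓ, hexp, rfl⟩ := hγ
  have hmem : ∀ t ∈ Icc (0 : ℝ) (1 / 2), t ∈ Icc (0 : ℝ) 1 ∧ t + 1 / 2 ∈ Icc (0 : ℝ) 1 :=
    fun t ht => ⟨⟨ht.1, by linarith [ht.2]⟩, ⟨by linarith [ht.1], by linarith [ht.2]⟩⟩
  -- `ℓ (t + 1/2) - ℓ t` is a logarithm of `-1`, hence constant on `[0, 1/2]`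
  set ρ : ℝ → ℂ := fun t => ℓ (t + 1 / 2) - ℓ t
  have hρ : ∀ t ∈ Icc (0 : ℝ) (1 / 2), Complex.exp (ρ t) = -1 := fun t ht => by
    have : γ t ≠ 0 := hexp t (hmem t ht).1 ▸ Complex.exp_ne_zero _
    rw [Complex.exp_sub, hexp _ (hmem t ht).2, hexp _ (hmem t ht).1, hodd t ht, neg_div,
      div_self this]
  have h0 : (0 : ℝ) ∈ Icc (0 : ℝ) (1 / 2) := ⟨le_rfl, by norm_num⟩
  have hhalf : (1 / 2 : ℝ) ∈ Icc (0 : ℝ) (1 / 2) := ⟨by norm_num, le_rfl⟩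
  have hconst : ρ (1 / 2) - Real.pi * Complex.I = ρ 0 - Real.pi * Complex.I :=
    isPreconnected_Icc.eq_of_exp_eq_one (g := fun t => ρ t - Real.pi * Complex.I)
      (((hℓ.comp (by fun_prop) fun t ht => (hmem t ht).2).sub
        (hℓ.mono fun t ht => (hmem t ht).1)).sub continuousOn_const)
      (fun t ht => by rw [Complex.exp_sub, hρ t ht, Complex.exp_pi_mul_I, div_self (by norm_num)])
      hhalf h0
  have hρ0 : ρ 0 ≠ 0 := fun h => by
    have := hρ 0 h0
    rw [h, Complex.exp_zero] at this
    norm_num at this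
  intro hd
  apply hρ0
  norm_num [ρ] at hconst ⊢
  linear_combination (hd - hconst) / 2

end HasLogIncrement

theorem Real.cos_sin_ne_zero (x : ℝ) : (Real.cos x, Real.sin x) ≠ 0 := fun h => by
  have := Real.sin_sq_add_cos_sq x
  simp_all [Prod.ext_iff]

def unitLoop (t : ℝ) : ℝ × ℝ :=
  NormedSpace.normalize (Real.cos (2 * Real.pi * t), Real.sin (2 * Real.pi * t))

theorem unitLoop_mem_sphere (t : ℝ) : unitLoop t ∈ sphere (0 : ℝ × ℝ) 1 := by
  simpa [unitLoop, NormedSpace.norm_normalize_eq_one_iff] using Real.cos_sin_ne_zero _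

theorem continuous_unitLoop : Continuous unitLoop :=
  ((by fun_prop : Continuous fun t : ℝ => ‖(Real.cos (2 * Real.pi * t),
    Real.sin (2 * Real.pi * t))‖).inv₀ fun _ => norm_ne_zero_iff.2 (Real.cos_sin_ne_zero _)).smul
    (by fun_prop)

theorem unitLoop_add_half (t : ℝ) : unitLoop (t + 1 / 2) = -unitLoop t := by
  have : 2 * Real.pi * (t + 1 / 2) = 2 * Real.pi * t + Real.pi := by ring
  simp only [unitLoop, this, Real.cos_add_pi, Real.sin_add_pi, ← NormedSpace.normalize_neg,
    Prod.neg_mk]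

theorem unitLoop_one : unitLoop 1 = unitLoop 0 := by
  simp [unitLoop]

/-- `d` is `2πi` times the degree of `F` on the unit sphere (of the sup norm) about `0`. -/
def HasWindingIncrement (F : ℝ × ℝ → ℝ × ℝ) (d : ℂ) : Prop :=
  HasLogIncrement (fun t => Complex.equivRealProdCLM.symm (F (unitLoop t))) d

namespace HasWindingIncrement

variable {F G : ℝ × ℝ → ℝ × ℝ} {d : ℂ}

theorem iff_of_homotopy {H : ℝ → ℝ × ℝ → ℝ × ℝ}
    (hH : ContinuousOn (Function.uncurry H) (Icc 0 1 ×ˢ sphere 0 1))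
    (h0 : ∀ τ ∈ Icc (0 : ℝ) 1, ∀ v ∈ sphere (0 : ℝ × ℝ) 1, H τ v ≠ 0) :
    HasWindingIncrement (H 0) d ↔ HasWindingIncrement (H 1) d :=
  HasLogIncrement.iff_of_homotopy
    (H := fun p => Complex.equivRealProdCLM.symm (H p.1 (unitLoop p.2)))
    (Complex.equivRealProdCLM.symm.continuous.comp_continuousOn
      (hH.comp (continuous_fst.prodMk (continuous_unitLoop.comp continuous_snd)).continuousOn
        fun p hp => ⟨hp.1, unitLoop_mem_sphere _⟩))
    (fun p hp => by simpa using h0 _ hp.1 _ (unitLoop_mem_sphere _))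
    (fun τ _ => by simp only [unitLoop_one])

theorem zero_of_continuousOn_closedBall (hF : ContinuousOn F (closedBall 0 1))
    (h0 : ∀ v ∈ closedBall (0 : ℝ × ℝ) 1, F v ≠ 0) : HasWindingIncrement F 0 := by
  have hmaps : MapsTo (fun p : ℝ × (ℝ × ℝ) => p.1 • p.2) (Icc 0 1 ×ˢ sphere 0 1)
      (closedBall 0 1) := fun p hp => by
    simpa [norm_smul, abs_of_nonneg hp.1.1, mem_sphere_zero_iff_norm.1 hp.2] using hp.1.2
  have key := (iff_of_homotopy (H := fun τ v => F (τ • v)) (d := 0)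
    (hF.comp (by fun_prop) hmaps) fun τ hτ v hv => h0 _ (hmaps (x := (τ, v)) ⟨hτ, hv⟩)).1
  simpa using key (by simpa [HasWindingIncrement] using
    HasLogIncrement.const (by simpa using h0 0 (mem_closedBall_self zero_le_one)))

theorem iff_of_norm_sub_lt (hF : ContinuousOn F (sphere 0 1)) (hG : ContinuousOn G (sphere 0 1))
    (hFG : ∀ v ∈ sphere (0 : ℝ × ℝ) 1, ‖G v - F v‖ < ‖F v‖) :
    HasWindingIncrement F d ↔ HasWindingIncrement G d := by
  have hne : ∀ τ ∈ Icc (0 : ℝ) 1, ∀ v ∈ sphere (0 : ℝ × ℝ) 1, F v + τ • (G v - F v) ≠ 0 :=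
    fun τ hτ v hv h => by
      have : ‖τ • (G v - F v)‖ < ‖F v‖ := by
        rw [norm_smul, Real.norm_of_nonneg hτ.1]
        exact (mul_le_of_le_one_left (norm_nonneg _) hτ.2).trans_lt (hFG v hv)
      rw [eq_neg_of_add_eq_zero_right h, norm_neg] at this
      exact this.false
  have hF' : ContinuousOn (fun p : ℝ × (ℝ × ℝ) => F p.2) (Icc 0 1 ×ˢ sphere 0 1) :=
    hF.comp continuousOn_snd fun p hp => hp.2
  have hG' : ContinuousOn (fun p : ℝ × (ℝ × ℝ) => G p.2) (Icc 0 1 ×ˢ sphere 0 1) :=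
    hG.comp continuousOn_snd fun p hp => hp.2
  simpa using iff_of_homotopy (H := fun τ v => F v + τ • (G v - F v)) (d := d)
    (hF'.add (continuousOn_fst.smul (hG'.sub hF'))) hne

theorem ne_zero_of_odd (hF : HasWindingIncrement F d)
    (hodd : ∀ v ∈ sphere (0 : ℝ × ℝ) 1, F (-v) = -F v) : d ≠ 0 :=
  HasLogIncrement.ne_zero_of_odd hF fun t _ => by
    simp only [unitLoop_add_half, hodd _ (unitLoop_mem_sphere t), map_neg]

end HasWindingIncrement

theorem HasWindingIncrement.ne_zero_of_injOn_closedBall {h : ℝ × ℝ → ℝ × ℝ} {u : ℝ × ℝ} {ρ : ℝ}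
    {d : ℂ} (hh : ContinuousOn h (closedBall u ρ)) (hinj : InjOn h (closedBall u ρ)) (hρ : 0 < ρ)
    (hd : HasWindingIncrement (fun v => h (u + ρ • v) - h u) d) : d ≠ 0 := by
  have hmem₁ : ∀ v ∈ sphere (0 : ℝ × ℝ) 1, u + ρ • v ∈ closedBall u ρ := fun v hv =>
    add_smul_mem_closedBall hρ.le (sphere_subset_closedBall hv)
  have hmem₂ : ∀ τ ∈ Icc (0 : ℝ) 1, ∀ v ∈ sphere (0 : ℝ × ℝ) 1,
      u - (τ * ρ) • v ∈ closedBall u ρ := fun τ hτ v hv => by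
    simpa [norm_smul, abs_of_nonneg hτ.1, abs_of_pos hρ, mem_sphere_zero_iff_norm.1 hv] using
      mul_le_of_le_one_left hρ.le hτ.2
  -- move the centre `u` of the loop to `u - ρ • v`, which makes it odd
  have hodd := HasWindingIncrement.iff_of_homotopy (d := d)
    (H := fun τ v => h (u + ρ • v) - h (u - (τ * ρ) • v))
    ((hh.comp (by fun_prop) fun p hp => hmem₁ p.2 hp.2).sub
      (hh.comp (by fun_prop) fun p hp => hmem₂ p.1 hp.1 p.2 hp.2))
    fun τ hτ v hv heq => by
      have hp := hinj (hmem₁ v hv) (hmem₂ τ hτ v hv) (sub_eq_zero.1 heq)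
      have hv' : ((1 + τ) * ρ) • v = 0 := by linear_combination (norm := module) hp
      rcases smul_eq_zero.1 hv' with h | rfl
      · nlinarith [hτ.1]
      · simp at hv
  refine (hodd.1 (by simpa using hd)).ne_zero_of_odd fun v _ => ?_
  simp [smul_neg, ← sub_eq_add_neg]

theorem HasWindingIncrement.ne_zero_of_injOn {h : ℝ × ℝ → ℝ × ℝ} {z u : ℝ × ℝ} {r : ℝ} {d : ℂ}
    (hh : ContinuousOn h (closedBall z r)) (hinj : InjOn h (closedBall z r)) (hu : u ∈ ball z r)
    (hd : HasWindingIncrement (fun v => h (z + r • v) - h u) d) : d ≠ 0 := by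
  set ρ := (r - dist u z) / 2
  have hρ : 0 < ρ := by have := mem_ball.1 hu; simp only [ρ]; linarith
  have hsub : closedBall u ρ ⊆ closedBall z r :=
    closedBall_subset_closedBall' (by simp only [ρ]; linarith [mem_ball.1 hu])
  have hsegment : ∀ τ ∈ Icc (0 : ℝ) 1, ∀ v ∈ sphere (0 : ℝ × ℝ) 1,
      (1 - τ) • (u + ρ • v) + τ • (z + r • v) ∈ closedBall z r := fun τ hτ v hv =>
    convex_closedBall z r (hsub (add_smul_mem_closedBall hρ.le (sphere_subset_closedBall hv)))
      (add_smul_mem_closedBall (dist_nonneg.trans (mem_ball.1 hu).le) (sphere_subset_closedBall hv))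
      (by linarith [hτ.2]) hτ.1 (by ring)
  -- shrink the sphere `z + r • v` to the small sphere `u + ρ • v` around `u`
  have hshrink := HasWindingIncrement.iff_of_homotopy (d := d)
    (H := fun τ v => h ((1 - τ) • (u + ρ • v) + τ • (z + r • v)) - h u)
    ((hh.comp (by fun_prop) fun p hp => hsegment p.1 hp.1 p.2 hp.2).sub continuousOn_const)
    fun τ hτ v hv heq => by
      have hp := hinj (hsegment τ hτ v hv) (ball_subset_closedBall hu) (sub_eq_zero.1 heq)
      have hv' : ((1 - τ) * ρ + τ * r) • v = τ • (u - z) := by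
        linear_combination (norm := module) hp
      -- taking norms, `(1 - τ) ρ + τ r ≤ τ dist u z`, while `r - dist u z = 2 ρ`
      have := congrArg norm hv'
      rw [norm_smul, norm_smul, mem_sphere_zero_iff_norm.1 hv, ← dist_eq_norm, Real.norm_eq_abs,
        Real.norm_eq_abs, abs_of_nonneg hτ.1] at this
      have hr : r - dist u z = 2 * ρ := by simp only [ρ]; ring
      nlinarith [le_abs_self ((1 - τ) * ρ + τ * r), hτ.1]
  exact HasWindingIncrement.ne_zero_of_injOn_closedBall (hh.mono hsub) (hinj.mono hsub) hρ
    (by simpa using hshrink.2 (by simpa using hd))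

theorem mem_image_closedBall_of_dist_lt {h g : ℝ × ℝ → ℝ × ℝ} {z u : ℝ × ℝ} {r : ℝ}
    (hh : ContinuousOn h (closedBall z r)) (hinj : InjOn h (closedBall z r))
    (hg : ContinuousOn g (closedBall z r)) (hu : u ∈ ball z r)
    (hgh : ∀ s ∈ sphere z r, dist (g s) (h s) < dist (h u) (h s)) :
    h u ∈ g '' closedBall z r := by
  by_contra hgu
  have hr : 0 ≤ r := dist_nonneg.trans (mem_ball.1 hu).le
  have hball : MapsTo (fun v => z + r • v) (closedBall 0 1) (closedBall z r) :=
    fun v hv => add_smul_mem_closedBall hr hv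
  have hsphere : MapsTo (fun v => z + r • v) (sphere 0 1) (closedBall z r) :=
    fun v hv => sphere_subset_closedBall (add_smul_mem_sphere hr hv)
  have hG : HasWindingIncrement (fun v => g (z + r • v) - h u) 0 :=
    .zero_of_continuousOn_closedBall ((hg.comp (by fun_prop) hball).sub continuousOn_const)
      fun v hv hgv => hgu ⟨_, hball hv, sub_eq_zero.1 hgv⟩
  have hF : HasWindingIncrement (fun v => h (z + r • v) - h u) 0 := by
    refine (HasWindingIncrement.iff_of_norm_sub_lt
      ((hh.comp (by fun_prop) hsphere).sub continuousOn_const)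
      ((hg.comp (by fun_prop) hsphere).sub continuousOn_const) fun v hv => ?_).2 hG
    simpa [← dist_eq_norm, dist_comm (h u)] using hgh _ (add_smul_mem_sphere hr hv)
  exact hF.ne_zero_of_injOn hh hinj hu rfl

theorem mem_interior_image_closedBall {h : ℝ × ℝ → ℝ × ℝ} {z u : ℝ × ℝ} {r : ℝ}
    (hh : ContinuousOn h (closedBall z r)) (hinj : InjOn h (closedBall z r)) (hu : u ∈ ball z r) :
    h u ∈ interior (h '' closedBall z r) := by
  have hK : IsClosed (h '' sphere z r) :=
    ((isCompact_sphere z r).image_of_continuousOn (hh.mono sphere_subset_closedBall)).isClosed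
  have hnot : h u ∉ h '' sphere z r := by
    rintro ⟨s, hs, hsu⟩
    rw [hinj (sphere_subset_closedBall hs) (ball_subset_closedBall hu) hsu] at hs
    exact (mem_ball.1 hu).ne (mem_sphere.1 hs)
  obtain ⟨δ, hδ, hδK⟩ := Metric.isOpen_iff.1 hK.isOpen_compl _ hnot
  refine mem_interior.2 ⟨ball (h u) δ, fun w hw => ?_, isOpen_ball, mem_ball_self hδ⟩
  -- translating `h` by `h u - w` moves the sphere by less than its distance `δ` to `h u`
  obtain ⟨x, hx, hxw⟩ := mem_image_closedBall_of_dist_lt (g := fun x => h x + (h u - w))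
    hh hinj (hh.add continuousOn_const) hu fun s hs => by
      calc dist (h s + (h u - w)) (h s) = dist w (h u) := by
            rw [dist_self_add_left, dist_eq_norm']
        _ < δ := hw
        _ ≤ dist (h u) (h s) := not_lt.1 fun hlt => hδK (mem_ball'.2 hlt) ⟨s, hs, rfl⟩
  exact ⟨x, hx, by rw [eq_sub_of_add_eq hxw, sub_sub_cancel]⟩

theorem image_sphere_subset_frontier {φ ψ : ℝ × ℝ → ℝ × ℝ} {z : ℝ × ℝ} {r : ℝ} (hr : r ≠ 0)
    (hψ : ContinuousOn ψ (φ '' closedBall z r)) (hinv : LeftInvOn ψ φ (closedBall z r)) :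
    φ '' sphere z r ⊆ frontier (φ '' closedBall z r) := by
  rintro _ ⟨s, hs, rfl⟩
  have hsB := sphere_subset_closedBall hs
  refine ⟨subset_closure (mem_image_of_mem φ hsB), fun hint => ?_⟩
  obtain ⟨ρ, hρ, hball⟩ := Metric.isOpen_iff.1 isOpen_interior _ hint
  have hD : closedBall (φ s) (ρ / 2) ⊆ φ '' closedBall z r :=
    (closedBall_subset_ball (by linarith)).trans (hball.trans interior_subset)
  have hs' := mem_interior_image_closedBall (hψ.mono hD)
    (hinv.rightInvOn_image.injOn.mono hD) (mem_ball_self (half_pos hρ))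
  rw [hinv hsB] at hs'
  have : s ∈ ball z r := by
    rw [← interior_closedBall z hr]
    refine interior_mono ?_ hs'
    rw [← hinv.image_image]
    exact image_mono hD
  exact (mem_ball.1 this).ne (mem_sphere.1 hs)

theorem setOf_lt_infDist_frontier_subset_image {h ψ g : ℝ × ℝ → ℝ × ℝ} {z : ℝ × ℝ} {r ε : ℝ}
    (hr : r ≠ 0) (hh : ContinuousOn h (closedBall z r))
    (hψ : ContinuousOn ψ (h '' closedBall z r)) (hinv : LeftInvOn ψ h (closedBall z r))
    (hg : ContinuousOn g (closedBall z r)) (hgh : ∀ s ∈ sphere z r, dist (g s) (h s) ≤ ε) :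
    {y ∈ h '' closedBall z r | ε < infDist y (frontier (h '' closedBall z r))} ⊆
      g '' closedBall z r := by
  rintro _ ⟨⟨u, hu, rfl⟩, hfar⟩
  have hsep : ∀ s ∈ sphere z r, ε < dist (h u) (h s) := fun s hs =>
    hfar.trans_le (infDist_le_dist_of_mem (image_sphere_subset_frontier hr hψ hinv ⟨s, hs, rfl⟩))
  have hu' : u ∈ ball z r := by
    refine mem_ball.2 ((mem_closedBall.1 hu).lt_of_ne fun hur => ?_)
    have := hsep u hur
    rw [dist_self] at this
    linarith [hgh u hur, dist_nonneg (x := g u) (y := h u)]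
  exact mem_image_closedBall_of_dist_lt hh hinv.injOn hg hu' fun s hs =>
    (hgh s hs).trans_lt (hsep s hs)

namespace BiLipOn

variable {L : ℝ} {f : ℝ × ℝ → ℝ × ℝ} {s t : Set (ℝ × ℝ)}

theorem mono (h : BiLipOn L f t) (hst : s ⊆ t) : BiLipOn L f s :=
  fun x hx y hy => h x (hst hx) y (hst hy)

theorem continuousOn (h : BiLipOn L f s) : ContinuousOn f s :=
  (LipschitzOnWith.of_dist_le_mul (K := L.toNNReal) fun x hx y hy =>
    (h x hx y hy).2.trans (by gcongr; exact Real.le_coe_toNNReal L)).continuousOn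

theorem of_tendsto {ι : Type*} {l : Filter ι} [l.NeBot] {F : ι → ℝ × ℝ → ℝ × ℝ}
    (hF : ∀ i, BiLipOn L (F i) s) (hlim : ∀ x ∈ s, Tendsto (fun i => F i x) l (𝓝 (f x))) :
    BiLipOn L f s := fun x hx y hy =>
  have hd := (hlim x hx).dist (hlim y hy)
  ⟨ge_of_tendsto hd (Eventually.of_forall fun i => (hF i x hx y hy).1),
    le_of_tendsto hd (Eventually.of_forall fun i => (hF i x hx y hy).2)⟩

theorem exists_leftInvOn (h : BiLipOn L f s) (hL : 0 < L) :
    ∃ ψ, ContinuousOn ψ (f '' s) ∧ LeftInvOn ψ f s := by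
  have hinj : InjOn f s := fun x hx y hy hxy => by
    have := (h x hx y hy).1
    rw [hxy, dist_self] at this
    exact dist_le_zero.1 (by nlinarith [one_div_pos.2 hL, dist_nonneg (x := x) (y := y)])
  refine ⟨Function.invFunOn f s,
    (LipschitzOnWith.of_dist_le_mul (K := L.toNNReal) ?_).continuousOn, hinj.leftInvOn_invFunOn⟩
  rintro _ ⟨x, hx, rfl⟩ _ ⟨y, hy, rfl⟩
  rw [hinj.leftInvOn_invFunOn hx, hinj.leftInvOn_invFunOn hy, Real.coe_toNNReal _ hL.le]
  calc dist x y = L * (1 / L * dist x y) := by field_simp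
    _ ≤ L * dist (f x) (f y) := by gcongr; exact (h x hx y hy).1

end BiLipOn

/-- If `φ_k : I² → ℝ²` are `L`-bi-Lipschitz and converge uniformly to `φ`, then for
every `ε > 0` and all large `k`: (i) `φ_k(U) ⊆ V_ε^{ext}(φ(U))`, and
(ii) `V_ε^{int}(φ(U)) ⊆ φ_k(U)`, where `U ⊆ I²` is a closed ball,
`V_ε^{ext}(A) = {x : d(x, A) < ε}` and `V_ε^{int}(A) = {x ∈ A : d(x, ∂A) > ε}`. -/
theorem image_closedBall_convergence (L : ℝ) (hL : 1 ≤ L)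
    (z : ℝ × ℝ) (r : ℝ) (hr : 0 < r) (hU : Metric.closedBall z r ⊆ I2)
    (φk : ℕ → ℝ × ℝ → ℝ × ℝ) (φ : ℝ × ℝ → ℝ × ℝ)
    (hbilip : ∀ k, BiLipOn L (φk k) I2)
    (hconv : TendstoUniformlyOn φk φ atTop I2) :
    ∀ ε : ℝ, 0 < ε → ∃ k₀ : ℕ, ∀ k ≥ k₀,
      (φk k '' Metric.closedBall z r ⊆
        { x : ℝ × ℝ | infDist x (φ '' Metric.closedBall z r) < ε }) ∧
      ({ x ∈ φ '' Metric.closedBall z r |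
          ε < infDist x (frontier (φ '' Metric.closedBall z r)) } ⊆
        φk k '' Metric.closedBall z r) := by
  intro ε hε
  have hφ : BiLipOn L φ (closedBall z r) :=
    (BiLipOn.of_tendsto hbilip fun x hx => hconv.tendsto_at hx).mono hU
  obtain ⟨ψ, hψ, hinv⟩ := hφ.exists_leftInvOn (by linarith)
  obtain ⟨k₀, hk₀⟩ := eventually_atTop.1 (Metric.tendstoUniformlyOn_iff.1 hconv ε hε)
  refine ⟨k₀, fun k hk => ⟨?_, setOf_lt_infDist_frontier_subset_image hr.ne' hφ.continuousOn hψ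
    hinv ((hbilip k).continuousOn.mono hU) fun s hs => ?_⟩⟩
  · rintro _ ⟨x, hx, rfl⟩
    exact (infDist_le_dist_of_mem (mem_image_of_mem φ hx)).trans_lt
      (dist_comm (φ x) _ ▸ hk₀ k hk x (hU hx))
  · rw [dist_comm]
    exact (hk₀ k hk s (hU (sphere_subset_closedBall hs))).le
end
end

section
/- Let φ : I² → [a, b] be continuous with 0 < a < b, let ε > 0, let C_ε ⊂ I² be a connected component of φ⁻¹((a, a+ε)), let S_ε ⊂ C_ε be a closed square, and let ρ_ε : S_ε → [a, a+ε] be continuous with sup_{x ∈ S_ε} ρ_ε(x) ≥ sup over C_ε of any continuous extension taking values in [a, a+ε]. Then there exists a continuous function ρ : I² → [a, b] such that ρ = φ on I² \ C_ε, ρ = ρ_ε on S_ε, and ‖ρ − φ‖₀ < ε. -/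
/-!
The component `C_ε` is relatively open in `I²`: around each of its points a small ball meets the
convex set `I²` in a connected subset of `I² ∩ φ⁻¹((a, a+ε))`, which maximality absorbs into `C_ε`.
Hence `I² \ C_ε` is closed and disjoint from the closed square `S_ε`, and an Urysohn function `u`
vanishing on `I² \ C_ε` and equal to `1` on `S_ε` interpolates `ρ = φ + u (g - φ)` between `φ` and a
Tietze extension `g` of `ρ_ε` with values in `[a, a+ε]`. On `C_ε` both `φ` and `g` lie in
`[a, a+ε]`, `φ` even in the open interval, so `|ρ - φ| ≤ |g - φ| < ε`.
-/

open MeasureTheory Set Filter Topology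

noncomputable section

open AffineMap

theorem Convex.mem_nhdsWithin_of_maximal_isPreconnected {E : Type*} [SeminormedAddCommGroup E]
    [NormedSpace ℝ E] {K U C : Set E} (hK : Convex ℝ K)
    (hU : ∀ y ∈ U, U ∈ 𝓝[K] y) (hUK : U ⊆ K) (hCU : C ⊆ U) (hC : IsPreconnected C)
    (hCmax : ∀ D, C ⊆ D → D ⊆ U → IsPreconnected D → D = C) {x : E} (hx : x ∈ C) :
    C ∈ 𝓝[K] x := by
  obtain ⟨r, hr, hball⟩ := Metric.mem_nhdsWithin_iff.mp (hU x (hCU hx))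
  have hxB : x ∈ Metric.ball x r ∩ K := ⟨Metric.mem_ball_self hr, hUK (hCU hx)⟩
  have hB : IsPreconnected (Metric.ball x r ∩ K) :=
    ((convex_ball x r).inter hK).isPreconnected
  have hCB : C ∪ Metric.ball x r ∩ K = C :=
    hCmax _ subset_union_left (union_subset hCU hball) (hC.union x hx hxB hB)
  exact Metric.mem_nhdsWithin_iff.mpr ⟨r, hr, hCB ▸ subset_union_right⟩

theorem IsClosed.diff_of_forall_mem_nhdsWithin {X : Type*} [TopologicalSpace X] {K C : Set X}
    (hK : IsClosed K) (hC : ∀ x ∈ C, C ∈ 𝓝[K] x) : IsClosed (K \ C) := by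
  rw [← isOpen_compl_iff, isOpen_iff_mem_nhds]
  intro x hx
  by_cases hxK : x ∈ K
  · have hxC : x ∈ C := by simpa [hxK] using hx
    obtain ⟨t, ht, htK⟩ := mem_nhdsWithin_iff_exists_mem_nhds_inter.mp (hC x hxC)
    filter_upwards [ht] with y hy hyKC
    exact hyKC.2 (htK ⟨hy, hyKC.1⟩)
  · filter_upwards [hK.isOpen_compl.mem_nhds hxK] with y hy hyKC
    exact hy hyKC.1

theorem ContinuousOn.exists_continuous_extension_forall_mem {Y : Type*} [TopologicalSpace Y]
    [NormalSpace Y] {s : Set Y} (hs : IsClosed s) {f : Y → ℝ} (hf : ContinuousOn f s)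
    {t : Set ℝ} [OrdConnected t] (hne : t.Nonempty) (hft : ∀ x ∈ s, f x ∈ t) :
    ∃ g : C(Y, ℝ), (∀ y, g y ∈ t) ∧ EqOn g f s := by
  obtain ⟨g, hgt, hgf⟩ := ContinuousMap.exists_restrict_eq_forall_mem_of_closed
    ⟨s.domRestrict f, hf.domRestrict⟩ (t := t) (fun x ↦ hft x x.2) hne hs
  exact ⟨g, hgt, fun x hx ↦ congr($hgf ⟨x, hx⟩)⟩

theorem abs_lineMap_sub_left_le {x y t : ℝ} (ht : t ∈ Icc (0 : ℝ) 1) :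
    |lineMap x y t - x| ≤ |y - x| := by
  have h := dist_lineMap_left x y t
  rw [Real.dist_eq, Real.dist_eq, Real.norm_eq_abs, abs_of_nonneg ht.1] at h
  rw [h, abs_sub_comm y]
  exact mul_le_of_le_one_left (abs_nonneg _) ht.2

theorem exists_glued_density_general (a b ε : ℝ) (hε : 0 < ε)
    (hεab : ε < b - a)
    (φ : ℝ × ℝ → ℝ) (hφ : ContinuousOn φ I2) (hφrange : ∀ x ∈ I2, φ x ∈ Set.Icc a b)
    (Cε : Set (ℝ × ℝ))
    (hCsub : Cε ⊆ I2 ∩ φ ⁻¹' (Set.Ioo a (a + ε)))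
    (hCconn : IsPreconnected Cε)
    (hCmax : ∀ D : Set (ℝ × ℝ), Cε ⊆ D → D ⊆ I2 ∩ φ ⁻¹' (Set.Ioo a (a + ε)) →
      IsPreconnected D → D = Cε)
    (Sε : Set (ℝ × ℝ)) (hSsq : ∃ (z : ℝ × ℝ) (l : ℝ), 0 < l ∧
      Sε = Set.Icc z (z.1 + l, z.2 + l))
    (hSC : Sε ⊆ Cε)
    (ρε : ℝ × ℝ → ℝ) (hρε : ContinuousOn ρε Sε)
    (hρεrange : ∀ x ∈ Sε, ρε x ∈ Set.Icc a (a + ε)) :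
    ∃ ρ : ℝ × ℝ → ℝ, ContinuousOn ρ I2 ∧ (∀ x ∈ I2, ρ x ∈ Set.Icc a b) ∧
      (∀ x ∈ I2 \ Cε, ρ x = φ x) ∧ (∀ x ∈ Sε, ρ x = ρε x) ∧
      (∀ x ∈ I2, |ρ x - φ x| < ε) := by
  have hSclosed : IsClosed Sε := by
    obtain ⟨z, l, -, rfl⟩ := hSsq
    exact isClosed_Icc
  have hrelOpen : ∀ y ∈ I2 ∩ φ ⁻¹' Ioo a (a + ε), I2 ∩ φ ⁻¹' Ioo a (a + ε) ∈ 𝓝[I2] y :=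
    fun y hy ↦ inter_mem self_mem_nhdsWithin (hφ y hy.1 (Ioo_mem_nhds hy.2.1 hy.2.2))
  have hcomplClosed : IsClosed (I2 \ Cε) := isClosed_Icc.diff_of_forall_mem_nhdsWithin fun x hx ↦
    (convex_Icc _ _).mem_nhdsWithin_of_maximal_isPreconnected hrelOpen inter_subset_left hCsub
      hCconn hCmax hx
  obtain ⟨u, hu0, hu1, hu⟩ := exists_continuous_zero_one_of_isClosed hcomplClosed hSclosed
    (disjoint_left.mpr fun x hx hxS ↦ hx.2 (hSC hxS))
  obtain ⟨g, hg, hgρ⟩ := hρε.exists_continuous_extension_forall_mem hSclosed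
    (nonempty_Icc.mpr (le_add_of_nonneg_right hε.le)) hρεrange
  have hφu : ∀ x ∈ I2 \ Cε, lineMap (φ x) (g x) (u x) = φ x := fun x hx ↦ by
    simp [hu0 hx]
  refine ⟨fun x ↦ lineMap (φ x) (g x) (u x), hφ.lineMap g.continuous.continuousOn
    u.continuous.continuousOn, fun x hx ↦ ?_, hφu, fun x hx ↦ ?_, fun x hx ↦ ?_⟩
  · have hgab : g x ∈ Icc a b := Icc_subset_Icc_right (by linarith) (hg x)
    exact (convex_Icc a b).lineMap_mem (hφrange x hx) hgab (hu x)
  · simp [hu1 hx, hgρ hx]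
  · by_cases hxC : x ∈ Cε
    · have hφx := (hCsub hxC).2
      calc |lineMap (φ x) (g x) (u x) - φ x| ≤ |g x - φ x| := abs_lineMap_sub_left_le (hu x)
        _ < ε := abs_sub_lt_iff.mpr ⟨by linarith [(hg x).2, hφx.1], by linarith [(hg x).1, hφx.2]⟩
    · simpa [hφu x ⟨hx, hxC⟩] using hε

/-- Gluing lemma: given continuous `φ : I² → [a,b]`, a connected component `C_ε` of
`φ⁻¹((a, a+ε))`, a closed square `S_ε ⊆ C_ε` and a continuous
`ρ_ε : S_ε → [a, a+ε]` dominating (on `S_ε`) any continuous extension to `C_ε`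
with values in `[a, a+ε]`, there is a continuous `ρ : I² → [a,b]` with `ρ = φ`
off `C_ε`, `ρ = ρ_ε` on `S_ε`, and `‖ρ - φ‖₀ < ε`. -/
theorem exists_glued_density (a b ε : ℝ) (ha : 0 < a) (hab : a < b) (hε : 0 < ε)
    (hεab : ε < b - a)
    (φ : ℝ × ℝ → ℝ) (hφ : ContinuousOn φ I2) (hφrange : ∀ x ∈ I2, φ x ∈ Set.Icc a b)
    (Cε : Set (ℝ × ℝ)) (hCne : Cε.Nonempty)
    (hCsub : Cε ⊆ I2 ∩ φ ⁻¹' (Set.Ioo a (a + ε)))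
    (hCconn : IsPreconnected Cε)
    (hCmax : ∀ D : Set (ℝ × ℝ), Cε ⊆ D → D ⊆ I2 ∩ φ ⁻¹' (Set.Ioo a (a + ε)) →
      IsPreconnected D → D = Cε)
    (Sε : Set (ℝ × ℝ)) (hSsq : ∃ (z : ℝ × ℝ) (l : ℝ), 0 < l ∧
      Sε = Set.Icc z (z.1 + l, z.2 + l))
    (hSC : Sε ⊆ Cε)
    (ρε : ℝ × ℝ → ℝ) (hρε : ContinuousOn ρε Sε)
    (hρεrange : ∀ x ∈ Sε, ρε x ∈ Set.Icc a (a + ε))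
    (hsup : ∀ ρhat : ℝ × ℝ → ℝ, ContinuousOn ρhat Cε →
      (∀ x ∈ Cε, ρhat x ∈ Set.Icc a (a + ε)) → (∀ x ∈ Sε, ρhat x = ρε x) →
      ∀ x ∈ Cε, ρhat x ≤ sSup (ρε '' Sε)) :
    ∃ ρ : ℝ × ℝ → ℝ, ContinuousOn ρ I2 ∧ (∀ x ∈ I2, ρ x ∈ Set.Icc a b) ∧
      (∀ x ∈ I2 \ Cε, ρ x = φ x) ∧ (∀ x ∈ Sε, ρ x = ρε x) ∧
      (∀ x ∈ I2, |ρ x - φ x| < ε) :=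
  exists_glued_density_general a b ε hε hεab φ hφ hφrange Cε hCsub hCconn hCmax Sε hSsq hSC ρε hρε
    hρεrange
end
end
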